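/- arXiv:math/0505127 — 2 statements merged into one kernel-verified Lean document; each statement's English description precedes it below -/
import Mathlib

section
/- If ϱ > 1, then for every m ≥ 1 the loss probabilities satisfy lim_{n→∞} p_n = (ϱ − 1)/ϱ; in particular the limit does not depend on m. -/
/-!
In generating functions `Π = ∑ πₙ zⁿ`, `R = ∑ rᵢ zⁱ` the recurrence reads `z Π = R (Π - 1)`,
i.e. `(1 - z) Π = R + (1 - R) Π`; dividing by `1 - z` gives the renewal equation
`Π = R/(1 - z) + Q Π` with `Q = (1 - R)/(1 - z)`, i.e.
`πₙ = Fₙ + ∑_{i+j=n} qᵢ πⱼ` with `Fₙ = r₀ + ⋯ + rₙ` and tails `qᵢ = 1 - Fᵢ ≥ 0`.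
Here `rᵢ` is the mixed Poisson distribution with rate `mμx`, `x ∼ A`, so `∑ qᵢ = ∑ i rᵢ = 1/ϱ < 1`.
The same equation for `(1 - z) Π` shows that `π` is nondecreasing, and then `πₙ ≤ 1 + πₙ/ϱ`
bounds it. Letting `n → ∞` in the renewal equation gives `L = 1 + L/ϱ` for `L = lim πₙ`,
so `1/L = (ϱ - 1)/ϱ`.
-/

open MeasureTheory Filter Topology

open Finset hiding mk
open scoped Nat

theorem hasSum_one_sub_sum_range {r : ℕ → ℝ} {m : ℝ} (hr : ∀ i, 0 ≤ r i) (h1 : HasSum r 1)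
    (hm : HasSum (fun i : ℕ => (i : ℝ) * r i) m) :
    HasSum (fun n => 1 - ∑ i ∈ range (n + 1), r i) m := by
  have hq (n : ℕ) : 0 ≤ 1 - ∑ i ∈ range n, r i :=
    sub_nonneg.2 (sum_le_hasSum _ (fun i _ => hr i) h1)
  have habel (N : ℕ) : ∑ n ∈ range N, (1 - ∑ i ∈ range (n + 1), r i)
      = ∑ i ∈ range N, (i : ℝ) * r i + N * (1 - ∑ i ∈ range N, r i) := by
    induction N with
    | zero => simp
    | succ N ih => rw [sum_range_succ, ih, sum_range_succ, sum_range_succ]; push_cast; ring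
  have htail (N : ℕ) : N * (1 - ∑ i ∈ range N, r i) ≤ m - ∑ i ∈ range N, (i : ℝ) * r i := by
    refine hasSum_le (fun k => mul_le_mul_of_nonneg_right ?_ (hr _))
      (((hasSum_nat_add_iff' N).2 h1).mul_left (N : ℝ)) ((hasSum_nat_add_iff' N).2 hm)
    push_cast
    linarith [k.cast_nonneg (α := ℝ)]
  have hzero : Tendsto (fun N : ℕ => N * (1 - ∑ i ∈ range N, r i)) atTop (𝓝 0) :=
    squeeze_zero (fun N => mul_nonneg N.cast_nonneg (hq N)) htail
      (by simpa using hm.tendsto_sum_nat.const_sub m)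
  rw [hasSum_iff_tendsto_nat_of_nonneg (fun n => hq (n + 1))]
  simpa only [habel, add_zero] using hm.tendsto_sum_nat.add hzero

theorem tendsto_sum_antidiagonal_mul {q a : ℕ → ℝ} {s L : ℝ} (hq : HasSum q s)
    (ha : Tendsto a atTop (𝓝 L)) :
    Tendsto (fun n => ∑ p ∈ antidiagonal n, q p.1 * a p.2) atTop (𝓝 (s * L)) := by
  obtain ⟨C, hC⟩ := ha.abs.bddAbove_range
  have hC' (n : ℕ) : |a n| ≤ C := hC ⟨n, rfl⟩
  set f : ℕ → ℕ → ℝ := fun n k => if k ≤ n then q k * a (n - k) else 0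
  have hsum (n : ℕ) : ∑ p ∈ antidiagonal n, q p.1 * a p.2 = ∑' k, f n k := by
    rw [Nat.sum_antidiagonal_eq_sum_range_succ_mk, tsum_eq_sum (s := range (n + 1))]
    · exact sum_congr rfl fun k hk => (if_pos (Nat.lt_succ_iff.1 (mem_range.1 hk))).symm
    · exact fun k hk => if_neg (by simpa [Nat.lt_succ_iff] using hk)
  simp_rw [hsum, ← (hq.mul_right L).tsum_eq]
  refine tendsto_tsum_of_dominated_convergence (bound := fun k => |q k| * C)
    (hq.summable.abs.mul_right C) (fun k => ?_) (Eventually.of_forall fun n k => ?_)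
  · refine ((ha.comp (tendsto_sub_atTop_nat k)).const_mul (q k)).congr' ?_
    filter_upwards [eventually_ge_atTop k] with n hn
    exact (if_pos hn).symm
  · simp only [f]
    split_ifs
    · rw [norm_mul, Real.norm_eq_abs, Real.norm_eq_abs]
      exact mul_le_mul_of_nonneg_left (hC' _) (abs_nonneg _)
    · simpa using mul_nonneg (abs_nonneg (q k)) ((abs_nonneg _).trans (hC' 0))

theorem tendsto_of_renewal {F q π : ℕ → ℝ} {m : ℝ} (hF1 : Tendsto F atTop (𝓝 1))
    (hF : ∀ n, F n ≤ 1) (hq0 : ∀ n, 0 ≤ q n) (hq : HasSum q m) (hm1 : m < 1)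
    (hmono : Monotone π) (hπ0 : 0 ≤ π 0)
    (hren : ∀ n, π n = F n + ∑ p ∈ antidiagonal n, q p.1 * π p.2) :
    Tendsto π atTop (𝓝 (1 - m)⁻¹) := by
  have hbound (n : ℕ) : π n ≤ (1 - m)⁻¹ := by
    have hmn : π n ≤ 1 + m * π n :=
      calc π n = F n + ∑ p ∈ antidiagonal n, q p.1 * π p.2 := hren n
        _ ≤ 1 + ∑ p ∈ antidiagonal n, q p.1 * π n := by
          gcongr with p hp
          · exact hF n
          · exact hq0 _
          · exact hmono (HasAntidiagonal.antidiagonal.snd_le hp)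
        _ ≤ 1 + m * π n := by
          rw [← sum_mul, Nat.sum_antidiagonal_eq_sum_range_succ (fun i _ => q i)]
          gcongr
          · exact hπ0.trans (hmono (Nat.zero_le n))
          · exact sum_le_hasSum _ (fun i _ => hq0 i) hq
    rw [← one_div, le_div_iff₀ (sub_pos.2 hm1)]
    linarith
  obtain ⟨L, hL⟩ : ∃ L, Tendsto π atTop (𝓝 L) :=
    ⟨_, tendsto_atTop_ciSup hmono ⟨_, Set.forall_mem_range.2 hbound⟩⟩
  have hL' : Tendsto π atTop (𝓝 (1 + m * L)) :=
    (hF1.add (tendsto_sum_antidiagonal_mul hq hL)).congr fun n => (hren n).symm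
  have hfix : L = 1 + m * L := tendsto_nhds_unique hL hL'
  rwa [(eq_inv_of_mul_eq_one_left (by linear_combination hfix : L * (1 - m) = 1)).symm]

namespace PowerSeries

theorem coeff_nonneg_of_eq_add_mul {𝕜 : Type*} [CommRing 𝕜] [LinearOrder 𝕜]
    [IsStrictOrderedRing 𝕜] {f g q : 𝕜⟦X⟧} (hg : ∀ n, 0 ≤ coeff n g) (hq : ∀ n, 0 ≤ coeff n q)
    (hq0 : constantCoeff q < 1) (h : f = g + q * f) (n : ℕ) :
    0 ≤ coeff n f := by
  induction n using Nat.strong_induction_on with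
  | _ n ih =>
    have hn := congrArg (coeff n) h
    rw [map_add, coeff_mul, ← add_sum_erase _ _ (show (0, n) ∈ antidiagonal n by simp),
      coeff_zero_eq_constantCoeff_apply] at hn
    have hrest : 0 ≤ ∑ p ∈ (antidiagonal n).erase (0, n), coeff p.1 q * coeff p.2 f := by
      refine sum_nonneg fun p hp => mul_nonneg (hq _) (ih _ ?_)
      obtain ⟨hne, hp⟩ := mem_erase.1 hp
      rw [HasAntidiagonal.mem_antidiagonal] at hp
      have : p.1 ≠ 0 := fun h0 => hne (Prod.ext h0 (by omega))
      omega
    have : 0 ≤ (1 - constantCoeff q) * coeff n f := by linarith [hg n]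
    exact nonneg_of_mul_nonneg_right this (by linarith)

section CommRing

variable {R : Type*} [CommRing R]

theorem coeff_mul_mk_one (f : R⟦X⟧) (n : ℕ) :
    coeff n (f * mk 1) = ∑ i ∈ range (n + 1), coeff i f := by
  simp [coeff_mul, Nat.sum_antidiagonal_eq_sum_range_succ_mk]

theorem coeff_one_sub_mul_mk_one (f : R⟦X⟧) (n : ℕ) :
    coeff n ((1 - f) * mk 1) = 1 - ∑ i ∈ range (n + 1), coeff i f := by
  simp [coeff_mul_mk_one, sum_sub_distrib]

variable {r π : ℕ → R}

theorem X_mul_mk_eq_of_recurrence (hπ0 : π 0 = 1)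
    (hrec : ∀ l, π l = ∑ i ∈ range (l + 1), r i * π (l - i + 1)) :
    X * mk π = mk r * (mk π - 1) := by
  ext (_ | l)
  · simp [hπ0]
  · rw [coeff_succ_X_mul, coeff_mk, coeff_mul, Nat.sum_antidiagonal_eq_sum_range_succ_mk,
      sum_range_succ, hrec l]
    simp only [map_sub, coeff_mk, coeff_one, Nat.sub_self, hπ0, if_true, sub_self, mul_zero,
      add_zero]
    refine sum_congr rfl fun i hi => ?_
    have hi : i ≤ l := Nat.lt_succ_iff.1 (mem_range.1 hi)
    rw [if_neg (by omega), sub_zero, Nat.sub_add_comm hi]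

theorem mk_eq_of_recurrence (hπ0 : π 0 = 1)
    (hrec : ∀ l, π l = ∑ i ∈ range (l + 1), r i * π (l - i + 1)) :
    mk π = mk r * mk 1 + ((1 - mk r) * mk 1) * mk π := by
  refine (IsUnit.of_mul_eq_one_right _ (mk_one_mul_one_sub_eq_one R)).mul_right_cancel ?_
  linear_combination (-1 : R⟦X⟧) * X_mul_mk_eq_of_recurrence hπ0 hrec
    - (mk r + (1 - mk r) * mk π) * mk_one_mul_one_sub_eq_one R

end CommRing

end PowerSeries

open PowerSeries

section Recurrence

variable {r π : ℕ → ℝ}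

theorem renewal_of_recurrence (hπ0 : π 0 = 1)
    (hrec : ∀ l, π l = ∑ i ∈ range (l + 1), r i * π (l - i + 1)) (n : ℕ) :
    π n = ∑ i ∈ range (n + 1), r i
      + ∑ p ∈ antidiagonal n, (1 - ∑ i ∈ range (p.1 + 1), r i) * π p.2 := by
  have h := congrArg (coeff n) (mk_eq_of_recurrence hπ0 hrec)
  rw [coeff_mk, map_add, coeff_mul_mk_one, coeff_mul] at h
  simpa only [coeff_one_sub_mul_mk_one, coeff_mk] using h

theorem monotone_of_recurrence (hr : ∀ i, 0 ≤ r i) (hF : ∀ n, ∑ i ∈ range (n + 1), r i ≤ 1)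
    (hr0 : 0 < r 0) (hπ0 : π 0 = 1)
    (hrec : ∀ l, π l = ∑ i ∈ range (l + 1), r i * π (l - i + 1)) :
    Monotone π := by
  have hD : (1 - X) * mk π = mk r + ((1 - mk r) * mk 1) * ((1 - X) * mk π) := by
    linear_combination (1 - X) * mk_eq_of_recurrence hπ0 hrec + mk r * mk_one_mul_one_sub_eq_one ℝ
  have hq0 : constantCoeff ((1 - mk r) * mk 1) < 1 := by
    rw [← coeff_zero_eq_constantCoeff_apply, coeff_one_sub_mul_mk_one]
    simpa using hr0
  refine monotone_nat_of_le_succ fun n => ?_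
  have h := coeff_nonneg_of_eq_add_mul (by simpa using hr)
    (fun n => by simpa [coeff_one_sub_mul_mk_one] using hF n) hq0 hD (n + 1)
  simpa [sub_mul, coeff_succ_X_mul] using h

theorem tendsto_of_recurrence {m : ℝ} (hr : ∀ i, 0 ≤ r i) (h1 : HasSum r 1)
    (hm : HasSum (fun i : ℕ => (i : ℝ) * r i) m) (hm1 : m < 1) (hπ0 : π 0 = 1)
    (hrec : ∀ l, π l = ∑ i ∈ range (l + 1), r i * π (l - i + 1)) :
    Tendsto π atTop (𝓝 (1 - m)⁻¹) := by
  have hF (n : ℕ) : ∑ i ∈ range (n + 1), r i ≤ 1 := sum_le_hasSum _ (fun i _ => hr i) h1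
  have hq := hasSum_one_sub_sum_range hr h1 hm
  have hq0 (n : ℕ) : 0 ≤ 1 - ∑ i ∈ range (n + 1), r i := sub_nonneg.2 (hF n)
  -- `1 - r 0` is the first tail, and the tails sum to `m < 1`
  have hr0 : 0 < r 0 := by
    have := le_hasSum hq 0 fun n _ => hq0 n
    simp only [zero_add, sum_range_one] at this
    linarith
  exact tendsto_of_renewal (h1.tendsto_sum_nat.comp (tendsto_add_atTop_nat 1)) hF hq0 hq hm1
    (monotone_of_recurrence hr hF hr0 hπ0 hrec) (hπ0 ▸ zero_le_one) (renewal_of_recurrence hπ0 hrec)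

end Recurrence

theorem exp_neg_mul_pow_div_factorial_nonneg {y : ℝ} (hy : 0 ≤ y) (n : ℕ) :
    0 ≤ Real.exp (-y) * y ^ n / n ! := by
  have := pow_nonneg hy n
  positivity

theorem hasSum_exp_neg_mul_pow_div_factorial (y : ℝ) :
    HasSum (fun n : ℕ => Real.exp (-y) * y ^ n / n !) 1 := by
  have h := (NormedSpace.expSeries_div_hasSum_exp y).mul_left (Real.exp (-y))
  rw [← Real.exp_eq_exp_ℝ, ← Real.exp_add, neg_add_cancel, Real.exp_zero] at h
  simpa only [mul_div_assoc] using h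

theorem hasSum_cast_mul_exp_neg_mul_pow_div_factorial (y : ℝ) :
    HasSum (fun n : ℕ => n * (Real.exp (-y) * y ^ n / n !)) y := by
  have hshift : (fun n : ℕ => ((n + 1 : ℕ) : ℝ) * (Real.exp (-y) * y ^ (n + 1) / (n + 1)!))
      = fun n : ℕ => y * (Real.exp (-y) * y ^ n / n !) := by
    ext n
    rw [Nat.factorial_succ]
    push_cast
    field_simp
    ring
  rw [← hasSum_nat_add_iff' 1, hshift]
  simpa using (hasSum_exp_neg_mul_pow_div_factorial y).mul_left y

theorem hasSum_integral_of_ae_nonneg {α ι : Type*} [MeasurableSpace α] {μ : Measure α}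
    [Countable ι] {F : ι → α → ℝ} {f : α → ℝ} (hF : ∀ i, AEStronglyMeasurable (F i) μ)
    (hF0 : ∀ i, 0 ≤ᵐ[μ] F i) (hf : Integrable f μ) (h : ∀ᵐ a ∂μ, HasSum (F · a) (f a)) :
    HasSum (fun i => ∫ a, F i a ∂μ) (∫ a, f a ∂μ) :=
  hasSum_integral_of_dominated_convergence F hF
    (fun i => (hF0 i).mono fun _ ha => (Real.norm_of_nonneg ha).le)
    (h.mono fun _ ha => ha.summable) (hf.congr (h.mono fun _ ha => ha.tsum_eq.symm)) h

section PoissonMixture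

variable {α : Type*} [MeasurableSpace α] {ν : Measure α} {y : α → ℝ}

theorem hasSum_integral_exp_neg_mul_pow_div_factorial [IsProbabilityMeasure ν]
    (hy : AEMeasurable y ν) (hy0 : 0 ≤ᵐ[ν] y) :
    HasSum (fun n : ℕ => ∫ a, Real.exp (-y a) * y a ^ n / n ! ∂ν) 1 := by
  simpa using hasSum_integral_of_ae_nonneg (fun n => by fun_prop)
    (fun n => hy0.mono fun _ ha => exp_neg_mul_pow_div_factorial_nonneg ha n)
    (integrable_const (1 : ℝ)) (ae_of_all _ fun a => hasSum_exp_neg_mul_pow_div_factorial (y a))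

theorem hasSum_cast_mul_integral_exp_neg_mul_pow_div_factorial (hy : Integrable y ν)
    (hy0 : 0 ≤ᵐ[ν] y) :
    HasSum (fun n : ℕ => n * ∫ a, Real.exp (-y a) * y a ^ n / n ! ∂ν) (∫ a, y a ∂ν) := by
  simp_rw [← integral_const_mul]
  exact hasSum_integral_of_ae_nonneg (fun n => by fun_prop)
    (fun n => hy0.mono fun _ ha =>
      mul_nonneg n.cast_nonneg (exp_neg_mul_pow_div_factorial_nonneg ha n)) hy
    (ae_of_all _ fun a => hasSum_cast_mul_exp_neg_mul_pow_div_factorial (y a))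

end PoissonMixture

theorem loss_prob_limit_rho_gt_one_general
    (m : ℕ) (μ : ℝ)
    (A : Measure ℝ) [IsProbabilityMeasure A]
    (hsupp : A {x | x < 0} = 0)
    (hint : Integrable (fun x => x) A)
    (hmean : 0 < ∫ x, x ∂A)
    (π : ℕ → ℝ) (hπ0 : π 0 = 1)
    (hrec : ∀ l, π l = ∑ i ∈ Finset.range (l + 1),
      (∫ x, Real.exp (-(m * μ * x)) * (m * μ * x) ^ i / (Nat.factorial i) ∂A)
        * π (l - i + 1))
    (hϱ : 1 < (∫ x, x ∂A)⁻¹ / (m * μ)) :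
    Tendsto (fun n => 1 / π n) atTop
      (𝓝 (((∫ x, x ∂A)⁻¹ / (m * μ) - 1) / ((∫ x, x ∂A)⁻¹ / (m * μ)))) := by
  set X := ∫ x, x ∂A
  have hc : 0 < (m : ℝ) * μ := by
    by_contra! h
    exact hϱ.not_ge ((div_nonpos_of_nonneg_of_nonpos (inv_nonneg.2 hmean.le) h).trans zero_le_one)
  have hload : m * μ * X < 1 :=
    calc m * μ * X < X⁻¹ * X := by gcongr; simpa using (lt_div_iff₀ hc).1 hϱ
      _ = 1 := inv_mul_cancel₀ hmean.ne'
  have hy0 : 0 ≤ᵐ[A] fun x => m * μ * x := by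
    have : ∀ᵐ x ∂A, 0 ≤ x := by simpa [ae_iff] using hsupp
    exact this.mono fun x hx => mul_nonneg hc.le hx
  have hmom := hasSum_cast_mul_integral_exp_neg_mul_pow_div_factorial (hint.const_mul _) hy0
  rw [integral_const_mul] at hmom
  have hr (i : ℕ) := integral_nonneg_of_ae
    (hy0.mono fun _ hx => exp_neg_mul_pow_div_factorial_nonneg hx i)
  have hlim := tendsto_of_recurrence hr
    (hasSum_integral_exp_neg_mul_pow_div_factorial (by fun_prop) hy0) hmom hload hπ0 hrec
  have hvalue : (X⁻¹ / (m * μ) - 1) / (X⁻¹ / (m * μ)) = ((1 - m * μ * X)⁻¹)⁻¹ := by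
    rw [inv_inv, sub_div, div_self (zero_lt_one.trans hϱ).ne', one_div_div, div_inv_eq_mul]
  simpa only [hvalue, one_div] using hlim.inv₀ (by simpa using (sub_pos.2 hload).ne')

/-- If the load `ϱ = λ/(mμ) > 1`, then the loss probabilities `p_n = 1/π_n` of the
`GI/M/m/n` queue satisfy `lim_{n→∞} p_n = (ϱ - 1)/ϱ`, independently of `m`. -/
theorem loss_prob_limit_rho_gt_one
    (m : ℕ) (hm : 1 ≤ m) (μ : ℝ) (hμ : 0 < μ)
    (A : Measure ℝ) [IsProbabilityMeasure A]
    (hsupp : A {x | x < 0} = 0)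
    (hint : Integrable (fun x => x) A)
    (hmean : 0 < ∫ x, x ∂A)
    (π : ℕ → ℝ) (hπ0 : π 0 = 1)
    (hrec : ∀ l, π l = ∑ i ∈ Finset.range (l + 1),
      (∫ x, Real.exp (-(m * μ * x)) * (m * μ * x) ^ i / (Nat.factorial i) ∂A)
        * π (l - i + 1))
    (hϱ : 1 < (∫ x, x ∂A)⁻¹ / (m * μ)) :
    Tendsto (fun n => 1 / π n) atTop
      (𝓝 (((∫ x, x ∂A)⁻¹ / (m * μ) - 1) / ((∫ x, x ∂A)⁻¹ / (m * μ)))) :=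
  loss_prob_limit_rho_gt_one_general m μ A hsupp hint hmean π hπ0 hrec hϱ
end

section
/- Let σ_m(n) ∈ (0,1) denote the unique root in (0,1) of the equation z = α_n(mμ_n − mμ_n z), and assume additionally that n ε_n → C ≥ 0. Then σ_m(n)^n → e^{−2C/ρ̃_2} as n → ∞. -/
/-!
Write `δₙ = 1 - σₙ` and `Xₙ = mμₙ x` under `Aₙ`, so that `E Xₙ = 1 / (1 - εₙ) = 1 + ηₙ` and the
root equation reads `E e^{-δₙ Xₙ} = 1 - δₙ`. The Taylor bounds
`u²/2 - u³/6 ≤ e^{-u} - 1 + u ≤ u²/2` turn it into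
`δₙ ϱ₂(n) / 2 - δₙ² ϱ₃(n) / 6 ≤ ηₙ ≤ δₙ ϱ₂(n) / 2`, and Jensen's inequality
`e^{-δₙ E Xₙ} ≤ 1 - δₙ` gives `δₙ ≤ 3ηₙ`, so `δₙ → 0`. As `ϱ₃` is bounded and `nηₙ → C`, this
forces `n δₙ ϱ₂(n) → 2C`, hence `n δₙ → 2C/ρ̃₂` and `σₙⁿ = (1 - δₙ)ⁿ → e^{-2C/ρ̃₂}`.
-/

open MeasureTheory Filter Topology

namespace Real

lemma exp_neg_le_one_sub_add_sq_div_two {u : ℝ} (hu : 0 ≤ u) :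
    exp (-u) ≤ 1 - u + u ^ 2 / 2 := by
  have hprod : exp (-u) * exp u = 1 := by rw [← exp_add, neg_add_cancel, exp_zero]
  have h := mul_le_mul_of_nonneg_left (quadratic_le_exp_of_nonneg hu) (exp_pos (-u)).le
  -- `(1 - u + u²/2) (1 + u + u²/2) = 1 + u⁴/4 ≥ 1 = exp (-u) exp u`
  refine le_of_mul_le_mul_right (a := 1 + u + u ^ 2 / 2) ?_ (by positivity)
  nlinarith [pow_nonneg hu 4]

lemma one_sub_add_sq_div_two_sub_cube_div_six_le_exp_neg {u : ℝ} (hu : 0 ≤ u) :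
    1 - u + u ^ 2 / 2 - u ^ 3 / 6 ≤ exp (-u) := by
  let f : ℝ → ℝ := fun t => exp (-t) - (1 - t + t ^ 2 / 2 - t ^ 3 / 6)
  have hderiv (t : ℝ) : deriv f t = 1 - t + t ^ 2 / 2 - exp (-t) := by
    simp (disch := fun_prop) [f]
    ring
  have hmono : MonotoneOn f (Set.Ici 0) := by
    refine monotoneOn_of_deriv_nonneg (convex_Ici 0) (by fun_prop) (by fun_prop) fun t ht => ?_
    rw [interior_Ici] at ht
    rw [hderiv]
    linarith [exp_neg_le_one_sub_add_sq_div_two (le_of_lt ht)]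
  have h := hmono Set.self_mem_Ici hu hu
  simp only [f, neg_zero, exp_zero] at h
  linarith

end Real

open Real

lemma le_three_mul_of_exp_neg_mul_one_add_le {δ η : ℝ} (hδ0 : 0 < δ) (hδ1 : δ ≤ 1) (hη : 0 ≤ η)
    (h : exp (-(δ * (1 + η))) ≤ 1 - δ) : δ ≤ 3 * η := by
  have hδη : 0 ≤ δ * η := mul_nonneg hδ0.le hη
  have hsplit : exp (-δ) - δ * η ≤ exp (-(δ * (1 + η))) := calc
    exp (-δ) - δ * η ≤ exp (-δ) * (1 - δ * η) := by
      nlinarith [exp_le_one_iff.mpr (neg_nonpos.mpr hδ0.le)]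
    _ ≤ exp (-δ) * exp (-(δ * η)) :=
      mul_le_mul_of_nonneg_left (one_sub_le_exp_neg _) (exp_pos _).le
    _ = exp (-(δ * (1 + η))) := by rw [← exp_add]; ring_nf
  have hcubic := one_sub_add_sq_div_two_sub_cube_div_six_le_exp_neg hδ0.le
  have hδ3 : δ ^ 3 ≤ δ ^ 2 := pow_le_pow_of_le_one hδ0.le hδ1 (by norm_num)
  have key : δ * δ ≤ δ * (3 * η) := by linarith
  exact le_of_mul_le_mul_left key hδ0

section Laplace

variable {Ω : Type*} [MeasurableSpace Ω] {μ : Measure Ω} {X : Ω → ℝ} {t : ℝ}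

lemma integrable_exp_neg_mul [IsFiniteMeasure μ] (hX : 0 ≤ᵐ[μ] X)
    (hXm : AEStronglyMeasurable X μ) (ht : 0 ≤ t) :
    Integrable (fun ω => exp (-(t * X ω))) μ := by
  refine Integrable.mono' (integrable_const 1)
    (continuous_exp.comp_aestronglyMeasurable (hXm.const_mul t).neg) ?_
  filter_upwards [hX] with ω hω
  rw [norm_of_nonneg (exp_pos _).le, exp_le_one_iff, neg_nonpos]
  exact mul_nonneg ht hω

variable [IsProbabilityMeasure μ]

lemma exp_neg_mul_integral_le_integral_exp_neg_mul (hX : 0 ≤ᵐ[μ] X) (h1 : Integrable X μ)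
    (ht : 0 ≤ t) : exp (-(t * ∫ ω, X ω ∂μ)) ≤ ∫ ω, exp (-(t * X ω)) ∂μ := by
  have h := convexOn_exp.map_integral_le (f := fun ω => -(t * X ω)) continuous_exp.continuousOn
    isClosed_univ (Eventually.of_forall fun _ => Set.mem_univ _) (h1.const_mul t).neg
    (integrable_exp_neg_mul hX h1.1 ht)
  simpa only [integral_neg, integral_const_mul] using h

lemma integral_exp_neg_mul_le (hX : 0 ≤ᵐ[μ] X) (h1 : Integrable X μ)
    (h2 : Integrable (fun ω => X ω ^ 2) μ) (ht : 0 ≤ t) :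
    ∫ ω, exp (-(t * X ω)) ∂μ ≤ 1 - t * ∫ ω, X ω ∂μ + t ^ 2 / 2 * ∫ ω, X ω ^ 2 ∂μ := by
  have hlin : Integrable (fun ω => 1 - t * X ω) μ := (integrable_const 1).sub (h1.const_mul t)
  calc ∫ ω, exp (-(t * X ω)) ∂μ ≤ ∫ ω, (1 - t * X ω + t ^ 2 / 2 * X ω ^ 2) ∂μ := by
        refine integral_mono_ae (integrable_exp_neg_mul hX h1.1 ht) (hlin.add (h2.const_mul _)) ?_
        filter_upwards [hX] with ω hω
        exact (exp_neg_le_one_sub_add_sq_div_two (mul_nonneg ht hω)).trans_eq (by ring)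
    _ = 1 - t * ∫ ω, X ω ∂μ + t ^ 2 / 2 * ∫ ω, X ω ^ 2 ∂μ := by
        rw [integral_add hlin (h2.const_mul _), integral_sub (integrable_const 1) (h1.const_mul t),
          integral_const_mul, integral_const_mul]
        simp

lemma le_integral_exp_neg_mul (hX : 0 ≤ᵐ[μ] X) (h1 : Integrable X μ)
    (h2 : Integrable (fun ω => X ω ^ 2) μ) (h3 : Integrable (fun ω => X ω ^ 3) μ) (ht : 0 ≤ t) :
    1 - t * ∫ ω, X ω ∂μ + t ^ 2 / 2 * ∫ ω, X ω ^ 2 ∂μ - t ^ 3 / 6 * ∫ ω, X ω ^ 3 ∂μ ≤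
      ∫ ω, exp (-(t * X ω)) ∂μ := by
  have hlin : Integrable (fun ω => 1 - t * X ω) μ := (integrable_const 1).sub (h1.const_mul t)
  have hquad : Integrable (fun ω => 1 - t * X ω + t ^ 2 / 2 * X ω ^ 2) μ :=
    hlin.add (h2.const_mul _)
  calc 1 - t * ∫ ω, X ω ∂μ + t ^ 2 / 2 * ∫ ω, X ω ^ 2 ∂μ - t ^ 3 / 6 * ∫ ω, X ω ^ 3 ∂μ
      = ∫ ω, (1 - t * X ω + t ^ 2 / 2 * X ω ^ 2 - t ^ 3 / 6 * X ω ^ 3) ∂μ := by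
        rw [integral_sub hquad (h3.const_mul _), integral_add hlin (h2.const_mul _),
          integral_sub (integrable_const 1) (h1.const_mul t), integral_const_mul,
          integral_const_mul, integral_const_mul]
        simp
    _ ≤ ∫ ω, exp (-(t * X ω)) ∂μ := by
        refine integral_mono_ae (hquad.sub (h3.const_mul _)) (integrable_exp_neg_mul hX h1.1 ht) ?_
        filter_upwards [hX] with ω hω
        exact (one_sub_add_sq_div_two_sub_cube_div_six_le_exp_neg (mul_nonneg ht hω)).trans_eq'
          (by ring)

lemma gap_bounds_of_integral_exp_neg_mul_eq (hX : 0 ≤ᵐ[μ] X) (h1 : Integrable X μ)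
    (h2 : Integrable (fun ω => X ω ^ 2) μ) (h3 : Integrable (fun ω => X ω ^ 3) μ) {δ : ℝ}
    (hδ0 : 0 < δ) (hδ1 : δ ≤ 1) (hmean : 1 ≤ ∫ ω, X ω ∂μ)
    (hroot : ∫ ω, exp (-(δ * X ω)) ∂μ = 1 - δ) :
    δ ≤ 3 * (∫ ω, X ω ∂μ - 1) ∧ 2 * (∫ ω, X ω ∂μ - 1) ≤ δ * ∫ ω, X ω ^ 2 ∂μ ∧
      δ * (∫ ω, X ω ^ 2 ∂μ - δ / 3 * ∫ ω, X ω ^ 3 ∂μ) ≤ 2 * (∫ ω, X ω ∂μ - 1) := by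
  have hjensen := exp_neg_mul_integral_le_integral_exp_neg_mul hX h1 hδ0.le
  have hupper := integral_exp_neg_mul_le hX h1 h2 hδ0.le
  have hlower := le_integral_exp_neg_mul hX h1 h2 h3 hδ0.le
  rw [hroot] at hjensen hupper hlower
  refine ⟨le_three_mul_of_exp_neg_mul_one_add_le hδ0 hδ1 (by linarith) ?_, ?_, ?_⟩
  · rwa [add_sub_cancel]
  · refine le_of_mul_le_mul_left ?_ hδ0
    linarith
  · refine le_of_mul_le_mul_left ?_ hδ0
    linarith

end Laplace

lemma tendsto_zero_of_tendsto_natCast_mul {g : ℕ → ℝ} {C : ℝ}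
    (h : Tendsto (fun n : ℕ => (n : ℝ) * g n) atTop (𝓝 C)) : Tendsto g atTop (𝓝 0) := by
  refine (h.div_atTop tendsto_natCast_atTop_atTop).congr' ?_
  filter_upwards [eventually_ne_atTop 0] with n hn
  field_simp

lemma tendsto_natCast_mul_of_gap_bounds {δ η P₂ P₃ : ℕ → ℝ} {C ρ B : ℝ}
    (hnη : Tendsto (fun n : ℕ => (n : ℝ) * η n) atTop (𝓝 C)) (hP₂ : Tendsto P₂ atTop (𝓝 ρ))
    (hδ : ∀ᶠ n in atTop, 0 < δ n) (hP₃ : ∀ᶠ n in atTop, P₃ n ≤ B)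
    (hbounds : ∀ᶠ n in atTop, δ n ≤ 3 * η n ∧ 2 * η n ≤ δ n * P₂ n ∧
      δ n * (P₂ n - δ n / 3 * P₃ n) ≤ 2 * η n) :
    Tendsto (fun n : ℕ => (n : ℝ) * δ n) atTop (𝓝 (2 * C / ρ)) := by
  have hP₂_lb : ∀ᶠ n in atTop, 2 / 3 ≤ P₂ n := by
    filter_upwards [hδ, hbounds] with n hδn ⟨h3η, hlow, _⟩
    by_contra! hlt
    linarith [mul_lt_mul_of_pos_left hlt hδn]
  have hρ : ρ ≠ 0 := (lt_of_lt_of_le (by norm_num) (ge_of_tendsto hP₂ hP₂_lb)).ne'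
  have hnδ2 : Tendsto (fun n : ℕ => (n : ℝ) * δ n ^ 2) atTop (𝓝 0) := by
    have hmajor : Tendsto (fun n : ℕ => 9 * ((n : ℝ) * η n) * η n) atTop (𝓝 0) := by
      simpa using (hnη.const_mul 9).mul (tendsto_zero_of_tendsto_natCast_mul hnη)
    refine squeeze_zero' (Eventually.of_forall fun n => by positivity) ?_ hmajor
    filter_upwards [hδ, hbounds] with n hδn ⟨h3η, _, _⟩
    have : δ n ^ 2 ≤ (3 * η n) ^ 2 := pow_le_pow_left₀ hδn.le h3η 2
    nlinarith [(n.cast_nonneg : (0 : ℝ) ≤ n)]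
  have hremainder : Tendsto (fun n : ℕ => (n : ℝ) * δ n * P₂ n - 2 * ((n : ℝ) * η n)) atTop
      (𝓝 0) := by
    refine squeeze_zero' ?_ ?_ (by simpa using hnδ2.mul_const (B / 3))
    · filter_upwards [hbounds] with n ⟨_, hlow, _⟩
      nlinarith [(n.cast_nonneg : (0 : ℝ) ≤ n)]
    · filter_upwards [hP₃, hbounds] with n hBn ⟨_, _, hup⟩
      have hn : (0 : ℝ) ≤ n := n.cast_nonneg
      nlinarith [mul_nonneg hn (sq_nonneg (δ n))]
  have hprod : Tendsto (fun n : ℕ => (n : ℝ) * δ n * P₂ n) atTop (𝓝 (2 * C)) := by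
    simpa using hremainder.add (hnη.const_mul 2)
  refine (hprod.div hP₂ hρ).congr' ?_
  filter_upwards [hP₂_lb] with n hn
  rw [Pi.div_apply]
  field_simp

lemma gap_bounds_of_root {ν : Measure ℝ} [IsProbabilityMeasure ν] (hsupp : ν {x | x < 0} = 0)
    (h1 : Integrable (fun x => x) ν) (h2 : Integrable (fun x => x ^ 2) ν)
    (h3 : Integrable (fun x => x ^ 3) ν) {c ε σ : ℝ} (hc : 0 ≤ c) (hε : 0 < ε) (hε1 : ε < 1)
    (hσ : σ ∈ Set.Ioo 0 1) (hϱ : (∫ x, x ∂ν)⁻¹ / c = 1 - ε)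
    (hroot : ∫ x, exp (-((c - c * σ) * x)) ∂ν = σ) :
    1 - σ ≤ 3 * ((1 - ε)⁻¹ - 1) ∧ 2 * ((1 - ε)⁻¹ - 1) ≤ (1 - σ) * ∫ x, (c * x) ^ 2 ∂ν ∧
      (1 - σ) * (∫ x, (c * x) ^ 2 ∂ν - (1 - σ) / 3 * ∫ x, (c * x) ^ 3 ∂ν) ≤
        2 * ((1 - ε)⁻¹ - 1) := by
  have hmean : ∫ x, c * x ∂ν = (1 - ε)⁻¹ := by
    rw [integral_const_mul, ← hϱ, inv_div, div_inv_eq_mul]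
  have hX : ∀ᵐ x ∂ν, 0 ≤ c * x := by
    have hx0 : ∀ᵐ x ∂ν, 0 ≤ x := by
      rw [ae_iff]
      simpa only [not_le] using hsupp
    filter_upwards [hx0] with x hx
    exact mul_nonneg hc hx
  rw [← hmean]
  refine gap_bounds_of_integral_exp_neg_mul_eq hX (h1.const_mul c)
    ((h2.const_mul (c ^ 2)).congr (ae_of_all _ fun x => by ring))
    ((h3.const_mul (c ^ 3)).congr (ae_of_all _ fun x => by ring))
    (sub_pos.2 hσ.2) (by linarith [hσ.1]) ?_ ?_
  · rw [hmean]
    exact (one_le_inv₀ (sub_pos.2 hε1)).2 (by linarith)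
  · rw [sub_sub_cancel]
    convert hroot using 4 with x
    ring

theorem root_power_limit_general
    (m : ℕ)
    (A : ℕ → Measure ℝ) [∀ n, IsProbabilityMeasure (A n)]
    (μ : ℕ → ℝ) (hμ : ∀ n, 0 < μ n)
    (hsupp : ∀ n, A n {x | x < 0} = 0)
    (hint1 : ∀ n, Integrable (fun x => x) (A n))
    (hint2 : ∀ n, Integrable (fun x => x ^ 2) (A n))
    (hint3 : ∀ n, Integrable (fun x => x ^ 3) (A n))
    (ε : ℕ → ℝ) (hε : ∀ n, 0 < ε n) (hε0 : Tendsto ε atTop (𝓝 0))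
    (hϱ : ∀ n, (∫ x, x ∂(A n))⁻¹ / (m * μ n) = 1 - ε n)
    (hϱ3 : ∃ B : ℝ, ∀ n, ∫ x, (m * μ n * x) ^ 3 ∂(A n) ≤ B)
    (ρ2 : ℝ) (hϱ2 : Tendsto (fun n => ∫ x, (m * μ n * x) ^ 2 ∂(A n)) atTop (𝓝 ρ2))
    (σ : ℕ → ℝ) (hσ : ∀ n, σ n ∈ Set.Ioo (0 : ℝ) 1)
    (hroot : ∀ n, ∫ x, Real.exp (-((m * μ n - m * μ n * σ n) * x)) ∂(A n) = σ n)
    (C : ℝ)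
    (hnε : Tendsto (fun n : ℕ => (n : ℝ) * ε n) atTop (𝓝 C)) :
    Tendsto (fun n => σ n ^ n) atTop (𝓝 (Real.exp (-(2 * C / ρ2)))) := by
  obtain ⟨B, hB⟩ := hϱ3
  have hε1 : ∀ᶠ n in atTop, ε n < 1 := hε0.eventually (eventually_lt_nhds one_pos)
  have hnη : Tendsto (fun n : ℕ => (n : ℝ) * ((1 - ε n)⁻¹ - 1)) atTop (𝓝 C) := by
    have hlim := hnε.mul ((tendsto_const_nhds.sub hε0).inv₀ (by norm_num : (1 : ℝ) - 0 ≠ 0))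
    rw [sub_zero, inv_one, mul_one] at hlim
    refine hlim.congr' ?_
    filter_upwards [hε1] with n hεn
    field_simp [(sub_pos.2 hεn).ne']
    ring
  have hbounds := hε1.mono fun n hεn => gap_bounds_of_root (hsupp n) (hint1 n) (hint2 n)
    (hint3 n) (mul_nonneg m.cast_nonneg (hμ n).le) (hε n) hεn (hσ n) (hϱ n) (hroot n)
  have hnδ := tendsto_natCast_mul_of_gap_bounds hnη hϱ2
    (Eventually.of_forall fun n => sub_pos.2 (hσ n).2) (Eventually.of_forall hB) hbounds
  simpa only [add_sub_cancel] using Real.tendsto_one_add_pow_exp_of_tendsto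
    (g := fun n => σ n - 1) (hnδ.neg.congr fun n => by ring)

/-- Relation (7.3): in the heavy-traffic regime with `n ε_n → C ≥ 0`, the root `σ_m(n)` of
`z = α_n(mμ_n - mμ_n z)` satisfies `σ_m(n)^n → e^{-2C/ρ̃₂}`. -/
theorem root_power_limit
    (m : ℕ) (hm : 1 ≤ m)
    (A : ℕ → Measure ℝ) [∀ n, IsProbabilityMeasure (A n)]
    (μ : ℕ → ℝ) (hμ : ∀ n, 0 < μ n)
    (hsupp : ∀ n, A n {x | x < 0} = 0)
    (hint1 : ∀ n, Integrable (fun x => x) (A n))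
    (hint2 : ∀ n, Integrable (fun x => x ^ 2) (A n))
    (hint3 : ∀ n, Integrable (fun x => x ^ 3) (A n))
    (ε : ℕ → ℝ) (hε : ∀ n, 0 < ε n) (hε0 : Tendsto ε atTop (𝓝 0))
    (hϱ : ∀ n, (∫ x, x ∂(A n))⁻¹ / (m * μ n) = 1 - ε n)
    (hϱ3 : ∃ B : ℝ, ∀ n, ∫ x, (m * μ n * x) ^ 3 ∂(A n) ≤ B)
    (ρ2 : ℝ) (hϱ2 : Tendsto (fun n => ∫ x, (m * μ n * x) ^ 2 ∂(A n)) atTop (𝓝 ρ2))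
    (σ : ℕ → ℝ) (hσ : ∀ n, σ n ∈ Set.Ioo (0 : ℝ) 1)
    (hroot : ∀ n, ∫ x, Real.exp (-((m * μ n - m * μ n * σ n) * x)) ∂(A n) = σ n)
    (C : ℝ) (hC : 0 ≤ C)
    (hnε : Tendsto (fun n : ℕ => (n : ℝ) * ε n) atTop (𝓝 C)) :
    Tendsto (fun n => σ n ^ n) atTop (𝓝 (Real.exp (-(2 * C / ρ2)))) :=
  root_power_limit_general m A μ hμ hsupp hint1 hint2 hint3 ε hε hε0 hϱ hϱ3 ρ2 hϱ2 σ hσ hroot C hnε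
end
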